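/- arXiv:2504.13757 — 2 statements merged into one kernel-verified Lean document; each statement's English description precedes it below -/
import Mathlib

section
/- Fix positive integers N, k₁, k₂ and 0 < ε ≤ 1 with ε·k₂ an integer. Assign N parties independently and uniformly at random to cells in [k₁] × [k₂]. Then by a union bound over rows, the probability that there exists a row r in which more than ε·k₂ columns c have no party in cell (r,c) is at most k₁·2^(H(ε)·k₂)·exp(-ε·N/k₁). -/
open MeasureTheory
open scoped ENNReal

/-- Binary entropy function. -/
noncomputable def binEnt (p : ℝ) : ℝ := -p * Real.logb 2 p - (1 - p) * Real.logb 2 (1 - p)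

lemma card_forall_mem (N : ℕ) {α : Type*} [Fintype α] [DecidableEq α] (C : Finset α) :
    Nat.card {f : Fin N → α | ∀ i, f i ∈ C} = C.card ^ N := by
  classical
  rw [Nat.card_eq_fintype_card]
  have e : {f : Fin N → α | ∀ i, f i ∈ C} ≃ ↑(Fintype.piFinset fun _ : Fin N => C) :=
    Equiv.setCongr (by ext f; exact ⟨fun h => Fintype.mem_piFinset.2 h,
      fun h => Fintype.mem_piFinset.1 h⟩)
  rw [Fintype.card_congr e, Fintype.card_coe, Fintype.card_piFinset]
  simp

lemma choose_mul_le_one (n m : ℕ) (p : ℝ) (hp : 0 ≤ p) (hp1 : p ≤ 1) (hmn : m ≤ n) :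
    (n.choose m : ℝ) * (p ^ m * (1 - p) ^ (n - m)) ≤ 1 := by
  have key := add_pow p (1-p) n
  have h1 : p + (1 - p) = 1 := by ring
  rw [h1, one_pow] at key
  have hterm : p ^ m * (1-p) ^ (n-m) * (n.choose m : ℝ) ≤
      ∑ k ∈ Finset.range (n+1), p ^ k * (1-p) ^ (n-k) * (n.choose k : ℝ) := by
    apply Finset.single_le_sum (fun k _ => ?_) (Finset.mem_range.2 (Nat.lt_succ_of_le hmn))
    exact mul_nonneg (mul_nonneg (pow_nonneg hp _) (pow_nonneg (by linarith) _))
      (Nat.cast_nonneg _)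
  calc (n.choose m : ℝ) * (p ^ m * (1 - p) ^ (n - m))
      = p ^ m * (1-p) ^ (n-m) * (n.choose m : ℝ) := by ring
    _ ≤ _ := hterm
    _ = 1 := key.symm

lemma two_rpow_binEnt_mul (k₂ m : ℕ) (hk₂ : 0 < k₂) (ε : ℝ) (hε0 : 0 < ε) (hε1 : ε ≤ 1)
    (hm : (m : ℝ) = ε * k₂) (hmk : m ≤ k₂) :
    (2:ℝ) ^ (binEnt ε * k₂) * (ε ^ m * (1-ε) ^ (k₂ - m)) = 1 := by
  rcases eq_or_lt_of_le hmk with heq | hlt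
  · -- m = k₂, hence ε = 1
    have hε : ε = 1 := by
      have hk : (k₂ : ℝ) ≠ 0 := Nat.cast_ne_zero.2 hk₂.ne'
      have : (k₂ : ℝ) = ε * k₂ := by rw [← hm, heq]
      field_simp at this; linarith
    subst hε
    have : binEnt 1 = 0 := by simp [binEnt]
    rw [this, heq]
    simp
  · -- m < k₂, hence ε < 1
    have hεlt : ε < 1 := by
      by_contra h
      push_neg at h
      have : ε = 1 := le_antisymm hε1 h
      subst this
      simp at hm
      omega
    have hq : 0 < 1 - ε := by linarith
    have hcast : ((k₂ - m : ℕ) : ℝ) = (1 - ε) * k₂ := by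
      rw [Nat.cast_sub hmk, hm]; ring
    have hexp : binEnt ε * k₂ =
        Real.logb 2 ε * (-(m:ℝ)) + Real.logb 2 (1-ε) * (-((k₂ - m : ℕ):ℝ)) := by
      rw [binEnt, hcast]; rw [hm]; ring
    rw [hexp, Real.rpow_add (by norm_num : (0:ℝ) < 2)]
    rw [Real.rpow_mul (by norm_num : (0:ℝ) ≤ 2), Real.rpow_mul (by norm_num : (0:ℝ) ≤ 2)]
    rw [Real.rpow_logb (by norm_num) (by norm_num) hε0,
        Real.rpow_logb (by norm_num) (by norm_num) hq]
    rw [Real.rpow_neg hε0.le, Real.rpow_neg hq.le, Real.rpow_natCast, Real.rpow_natCast]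
    have h1 : ε ^ m ≠ 0 := pow_ne_zero _ hε0.ne'
    have h2 : (1-ε) ^ (k₂ - m) ≠ 0 := pow_ne_zero _ hq.ne'
    field_simp

lemma choose_le_two_rpow (k₂ m : ℕ) (hk₂ : 0 < k₂) (ε : ℝ) (hε0 : 0 < ε) (hε1 : ε ≤ 1)
    (hm : (m : ℝ) = ε * k₂) (hmk : m ≤ k₂) :
    (k₂.choose m : ℝ) ≤ (2:ℝ) ^ (binEnt ε * k₂) := by
  have hP : 0 < ε ^ m * (1-ε) ^ (k₂ - m) := by
    rcases eq_or_lt_of_le hmk with heq | hlt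
    · rw [heq, Nat.sub_self, pow_zero, mul_one]
      exact pow_pos hε0 _
    · have hεlt : ε < 1 := by
        rcases lt_or_ge ε 1 with h | h
        · exact h
        · exfalso
          have : ε = 1 := le_antisymm hε1 h
          subst this
          simp at hm
          omega
      exact mul_pos (pow_pos hε0 _) (pow_pos (by linarith) _)
  have h1 := choose_mul_le_one k₂ m ε hε0.le hε1 hmk
  have h2 := two_rpow_binEnt_mul k₂ m hk₂ ε hε0 hε1 hm hmk
  have := h1.trans_eq h2.symm
  exact le_of_mul_le_mul_right this hP

/-- Assign `N` parties independently and uniformly at random to cells in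
`[k₁] × [k₂]`. By a union bound over rows, the probability that there exists a
row `r` in which more than `ε·k₂` columns `c` contain no party in cell `(r,c)`
is at most `k₁ · 2^(H(ε)·k₂) · exp(-ε·N/k₁)`. -/
theorem bad_cells_probability (N k₁ k₂ : ℕ) (hN : 0 < N)
    (hk₁ : 0 < k₁) (hk₂ : 0 < k₂)
    (ε : ℝ) (hε0 : 0 < ε) (hε1 : ε ≤ 1)
    (m : ℕ) (hm : (m : ℝ) = ε * k₂) :
    ((@PMF.uniformOfFintype (Fin N → Fin k₁ × Fin k₂) _
        ⟨fun _ => (⟨0, hk₁⟩, ⟨0, hk₂⟩)⟩).toMeasure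
      {f | ∃ r : Fin k₁,
            ε * k₂ < ((Finset.univ.filter
              (fun c : Fin k₂ => ∀ i, f i ≠ (r, c))).card : ℝ)}).toReal
      ≤ (k₁ : ℝ) * (2 : ℝ) ^ (binEnt ε * k₂) * Real.exp (-(ε * N / k₁)) := by
  classical
  haveI hne : Nonempty (Fin N → Fin k₁ × Fin k₂) := ⟨fun _ => (⟨0, hk₁⟩, ⟨0, hk₂⟩)⟩
  set μ := (@PMF.uniformOfFintype (Fin N → Fin k₁ × Fin k₂) _
      ⟨fun _ => (⟨0, hk₁⟩, ⟨0, hk₂⟩)⟩).toMeasure with hμ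
  set K := k₁ * k₂ with hK
  have hmk : m ≤ k₂ := by
    have : (m : ℝ) ≤ (k₂ : ℝ) := by
      have hk2r : (0:ℝ) < k₂ := by exact_mod_cast hk₂
      rw [hm]; nlinarith
    exact_mod_cast this
  have hmK : m ≤ K := hmk.trans (Nat.le_mul_of_pos_left k₂ hk₁)
  -- the sets in the union bound
  set A : Fin k₁ → Finset (Fin k₂) → Set (Fin N → Fin k₁ × Fin k₂) :=
    fun r S => {f | ∀ i, f i ∈ ((S.image fun c => (r, c))ᶜ : Finset (Fin k₁ × Fin k₂))}
    with hA
  -- subset step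
  have hsub : {f : Fin N → Fin k₁ × Fin k₂ | ∃ r : Fin k₁,
        ε * k₂ < ((Finset.univ.filter (fun c : Fin k₂ => ∀ i, f i ≠ (r, c))).card : ℝ)}
      ⊆ ⋃ r ∈ (Finset.univ : Finset (Fin k₁)),
          ⋃ S ∈ Finset.powersetCard m (Finset.univ : Finset (Fin k₂)), A r S := by
    rintro f ⟨r, hr⟩
    have hcard : m ≤ (Finset.univ.filter (fun c : Fin k₂ => ∀ i, f i ≠ (r, c))).card := by
      have : (m : ℝ) < _ := hm ▸ hr
      exact_mod_cast this.le
    obtain ⟨S, hS, hScard⟩ := Finset.exists_subset_card_eq hcard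
    refine Set.mem_biUnion (Finset.mem_univ r) ?_
    refine Set.mem_biUnion (Finset.mem_powersetCard.2 ⟨Finset.subset_univ S, hScard⟩) ?_
    intro i
    rw [Finset.mem_compl]
    intro hmem
    obtain ⟨c, hcS, hc⟩ := Finset.mem_image.1 hmem
    have := Finset.mem_filter.1 (hS hcS)
    exact this.2 i hc.symm
  -- measure of each A r S
  have hAmeas : ∀ r S, S ∈ Finset.powersetCard m (Finset.univ : Finset (Fin k₂)) →
      μ (A r S) = ((K - m : ℕ) : ℝ≥0∞) ^ N / ((K : ℕ) : ℝ≥0∞) ^ N := by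
    intro r S hSmem
    obtain ⟨-, hScard⟩ := Finset.mem_powersetCard.1 hSmem
    rw [hμ, PMF.toMeasure_uniformOfFintype_apply _ ((A r S).to_countable.measurableSet)]
    have hC : ((S.image fun c => (r, c))ᶜ : Finset (Fin k₁ × Fin k₂)).card = K - m := by
      rw [Finset.card_compl, Finset.card_image_of_injective _
        (fun a b h => by simpa using h), hScard]
      simp [hK, Fintype.card_prod]
    have hcardA : Nat.card (A r S) = (K - m) ^ N := by
      have := card_forall_mem N ((S.image fun c => (r, c))ᶜ)
      rw [hC] at this
      exact this
    have hcardΩ : Nat.card (Fin N → Fin k₁ × Fin k₂) = K ^ N := by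
      rw [Nat.card_eq_fintype_card]
      simp [hK, Fintype.card_fun, Fintype.card_prod]
    simp only [← Nat.card_eq_fintype_card]
    rw [hcardA, hcardΩ]
    push_cast
    ring_nf
  -- union bound in ℝ≥0∞
  have hbound : μ {f : Fin N → Fin k₁ × Fin k₂ | ∃ r : Fin k₁,
        ε * k₂ < ((Finset.univ.filter (fun c : Fin k₂ => ∀ i, f i ≠ (r, c))).card : ℝ)}
      ≤ (k₁ : ℝ≥0∞) * (k₂.choose m : ℝ≥0∞) *
          (((K - m : ℕ) : ℝ≥0∞) ^ N / ((K : ℕ) : ℝ≥0∞) ^ N) := by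
    refine (measure_mono hsub).trans ?_
    refine (measure_biUnion_finset_le _ _).trans ?_
    have step : ∀ r ∈ (Finset.univ : Finset (Fin k₁)),
        μ (⋃ S ∈ Finset.powersetCard m (Finset.univ : Finset (Fin k₂)), A r S)
          ≤ (k₂.choose m : ℝ≥0∞) *
              (((K - m : ℕ) : ℝ≥0∞) ^ N / ((K : ℕ) : ℝ≥0∞) ^ N) := by
      intro r _
      refine (measure_biUnion_finset_le _ _).trans ?_
      rw [Finset.sum_congr rfl (hAmeas r), Finset.sum_const, Finset.card_powersetCard,
        Finset.card_univ, Fintype.card_fin, nsmul_eq_mul]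
    refine (Finset.sum_le_sum step).trans ?_
    rw [Finset.sum_const, Finset.card_univ, Fintype.card_fin, nsmul_eq_mul]
    rw [mul_assoc]
  -- pass to toReal
  have hKpos : 0 < K := Nat.mul_pos hk₁ hk₂
  have hfin : (k₁ : ℝ≥0∞) * (k₂.choose m : ℝ≥0∞) *
      (((K - m : ℕ) : ℝ≥0∞) ^ N / ((K : ℕ) : ℝ≥0∞) ^ N) ≠ ⊤ := by
    apply ENNReal.mul_ne_top (ENNReal.mul_ne_top (ENNReal.natCast_ne_top _)
      (ENNReal.natCast_ne_top _))
    refine (ENNReal.div_lt_top (ENNReal.pow_ne_top (ENNReal.natCast_ne_top _)) ?_).ne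
    apply pow_ne_zero
    exact_mod_cast hKpos.ne'
  have hreal := ENNReal.toReal_mono hfin hbound
  refine hreal.trans ?_
  -- compute toReal of RHS
  have htoReal : ((k₁ : ℝ≥0∞) * (k₂.choose m : ℝ≥0∞) *
      (((K - m : ℕ) : ℝ≥0∞) ^ N / ((K : ℕ) : ℝ≥0∞) ^ N)).toReal
      = (k₁ : ℝ) * (k₂.choose m : ℝ) * (((K - m : ℕ) : ℝ) ^ N / ((K : ℝ)) ^ N) := by
    simp only [ENNReal.toReal_mul, ENNReal.toReal_div, ENNReal.toReal_pow,
      ENNReal.toReal_natCast]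
  rw [htoReal]
  -- final real inequality
  have hk₁r : (0:ℝ) < k₁ := Nat.cast_pos.2 hk₁
  have hk₂r : (0:ℝ) < k₂ := Nat.cast_pos.2 hk₂
  have hKr : (0:ℝ) < K := Nat.cast_pos.2 hKpos
  have hratio : ((K - m : ℕ) : ℝ) ^ N / ((K : ℝ)) ^ N ≤ Real.exp (-(ε * N / k₁)) := by
    have hsubK : ((K - m : ℕ) : ℝ) = (K : ℝ) - m := by
      rw [Nat.cast_sub hmK]
    have hx : ((K - m : ℕ) : ℝ) / K = 1 - ε / k₁ := by
      rw [hsubK, hm, hK]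
      push_cast
      field_simp
    have h0 : (0:ℝ) ≤ 1 - ε / k₁ := by
      have : ε / k₁ ≤ 1 := by
        rw [div_le_one hk₁r]
        have : (1:ℝ) ≤ k₁ := by exact_mod_cast hk₁
        linarith
      linarith
    have hstep : 1 - ε / k₁ ≤ Real.exp (-(ε / k₁)) := by
      have := Real.add_one_le_exp (-(ε / k₁))
      linarith
    calc ((K - m : ℕ) : ℝ) ^ N / ((K : ℝ)) ^ N
        = (((K - m : ℕ) : ℝ) / K) ^ N := by rw [div_pow]
      _ = (1 - ε / k₁) ^ N := by rw [hx]
      _ ≤ Real.exp (-(ε / k₁)) ^ N := pow_le_pow_left₀ h0 hstep N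
      _ = Real.exp (N * -(ε / k₁)) := (Real.exp_nat_mul _ N).symm
      _ = Real.exp (-(ε * N / k₁)) := by ring_nf
  have hchoose := choose_le_two_rpow k₂ m hk₂ ε hε0 hε1 hm hmk
  have hprod : (k₂.choose m : ℝ) * (((K - m : ℕ) : ℝ) ^ N / ((K : ℝ)) ^ N)
      ≤ (2 : ℝ) ^ (binEnt ε * k₂) * Real.exp (-(ε * N / k₁)) := by
    apply mul_le_mul hchoose hratio
    · positivity
    · positivity
  calc (k₁ : ℝ) * (k₂.choose m : ℝ) * (((K - m : ℕ) : ℝ) ^ N / ((K : ℝ)) ^ N)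
      = (k₁ : ℝ) * ((k₂.choose m : ℝ) * (((K - m : ℕ) : ℝ) ^ N / ((K : ℝ)) ^ N)) := by ring
    _ ≤ (k₁ : ℝ) * ((2 : ℝ) ^ (binEnt ε * k₂) * Real.exp (-(ε * N / k₁))) :=
        mul_le_mul_of_nonneg_left hprod hk₁r.le
    _ = (k₁ : ℝ) * (2 : ℝ) ^ (binEnt ε * k₂) * Real.exp (-(ε * N / k₁)) := by ring
end

section
/- Suppose a schedule guarantees that for every time slot τ there are at least N honest parties active throughout [τ, τ+W], and each of these parties is independently and uniformly assigned a column in [k₂]. Fix a column c, a lifetime T ≥ 0, and Δ ≤ W. Then the probability that there exists a time 0 ≤ τ ≤ T at which no honest party assigned to column c is active throughout [τ, τ+Δ] is at most ⌈(T+1)/(W-Δ+1)⌉ · exp(-N/k₂). -/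
/-!
Split the times `0, …, T` into `⌈(T+1)/L⌉` blocks of `L = W-Δ+1` consecutive slots. A party active
throughout `[jL, jL+W]` is active throughout `[τ, τ+Δ]` for every `τ` in the `j`-th block, so a bad
time in that block forces all `N` parties guaranteed at time `jL` to miss column `c`, an event of
probability `(1 - 1/k₂)^N ≤ exp(-N/k₂)`. A union bound over the blocks concludes.
-/

open MeasureTheory Finset

namespace PMF

variable {ι α β : Type*}

theorem toMeasure_uniformOfFintype_real_finset [Fintype β] [Nonempty β]
    [MeasurableSpace β] [MeasurableSingletonClass β] (s : Finset β) :
    (uniformOfFintype β).toMeasure.real s = #s / Fintype.card β := by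
  rw [measureReal_def, toMeasure_uniformOfFintype_apply _ s.measurableSet]
  simp [ENNReal.toReal_div]

theorem toMeasure_uniformOfFintype_real_piFinset [Fintype ι] [DecidableEq ι] [Fintype α]
    [Nonempty α] [MeasurableSpace α] [MeasurableSingletonClass α] (S : ι → Finset α) :
    (uniformOfFintype (ι → α)).toMeasure.real (Fintype.piFinset S)
      = ∏ i, (#(S i) : ℝ) / Fintype.card α := by
  rw [toMeasure_uniformOfFintype_real_finset, Fintype.card_piFinset, Fintype.card_fun,
    prod_div_distrib, prod_const, card_univ, Nat.cast_prod, Nat.cast_pow]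

theorem toMeasure_uniformOfFintype_real_forall_ne [Fintype ι] [DecidableEq ι] [Fintype α]
    [DecidableEq α] [Nonempty α] [MeasurableSpace α] [MeasurableSingletonClass α]
    (t : Finset ι) (c : α) :
    (uniformOfFintype (ι → α)).toMeasure.real {f | ∀ i ∈ t, f i ≠ c}
      = (1 - 1 / Fintype.card α : ℝ) ^ #t := by
  have hbox : {f : ι → α | ∀ i ∈ t, f i ≠ c}
      = Fintype.piFinset fun i => if i ∈ t then ({c}ᶜ : Finset α) else univ := by
    ext f
    simp only [Fintype.coe_piFinset, Set.mem_pi, Set.mem_univ, true_imp_iff]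
    refine forall_congr' fun i => ?_
    split_ifs with hi <;> simp [hi]
  have hα : (Fintype.card α : ℝ) ≠ 0 := Nat.cast_ne_zero.mpr Fintype.card_ne_zero
  rw [hbox, toMeasure_uniformOfFintype_real_piFinset]
  simp_rw [apply_ite (fun s : Finset α => (#s : ℝ) / Fintype.card α), card_univ, div_self hα]
  rw [prod_ite_mem, univ_inter, prod_const, card_compl, card_singleton,
    Nat.cast_sub Fintype.card_pos, sub_div, div_self hα, Nat.cast_one]

end PMF

theorem Real.one_sub_pow_le_exp_neg_mul {x : ℝ} (hx₀ : 0 ≤ x) (hx₁ : x ≤ 1) {m n : ℕ}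
    (hmn : m ≤ n) : (1 - x) ^ n ≤ Real.exp (-(m * x)) :=
  calc (1 - x) ^ n ≤ (1 - x) ^ m := pow_le_pow_of_le_one (by linarith) (by linarith) hmn
    _ ≤ Real.exp (-x) ^ m := pow_le_pow_left₀ (by linarith) (Real.one_sub_le_exp_neg x) m
    _ = Real.exp (-(m * x)) := by rw [← Real.exp_nat_mul, mul_neg]

theorem Nat.div_lt_ceil_succ_div {τ T L : ℕ} (hL : 0 < L) (hτ : τ ≤ T) :
    τ / L < ⌈((T : ℝ) + 1) / L⌉₊ := by
  have hceil : ((T : ℝ) + 1) ≤ ⌈((T : ℝ) + 1) / L⌉₊ * L :=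
    (div_le_iff₀ (by exact_mod_cast hL)).mp (Nat.le_ceil _)
  have hceil' : T + 1 ≤ ⌈((T : ℝ) + 1) / L⌉₊ * L := by exact_mod_cast hceil
  rw [Nat.div_lt_iff_lt_mul hL]
  omega

theorem Nat.add_le_div_mul_add {Δ W : ℕ} (hΔ : Δ ≤ W) (τ : ℕ) :
    τ + Δ ≤ τ / (W - Δ + 1) * (W - Δ + 1) + W := by
  have hdiv := Nat.div_add_mod' τ (W - Δ + 1)
  have hmod : τ % (W - Δ + 1) < W - Δ + 1 := Nat.mod_lt τ (Nat.zero_lt_succ _)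
  omega

theorem setOf_exists_uncovered_subset_iUnion {ι κ : Type*} (Active : ι → ℕ → Prop)
    {W T Δ : ℕ} (hΔ : Δ ≤ W) (s : ℕ → Finset ι)
    (hs : ∀ τ, ∀ p ∈ s τ, ∀ t, τ ≤ t → t ≤ τ + W → Active p t) (c : κ) :
    {f : ι → κ | ∃ τ ≤ T, ¬ ∃ p, f p = c ∧ ∀ t, τ ≤ t → t ≤ τ + Δ → Active p t}
      ⊆ ⋃ j ∈ range ⌈((T : ℝ) + 1) / ((W : ℝ) - Δ + 1)⌉₊,
          {f | ∀ p ∈ s (j * (W - Δ + 1)), f p ≠ c} := by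
  rintro f ⟨τ, hτ, hbad⟩
  have hL : ((W : ℝ) - Δ + 1) = ((W - Δ + 1 : ℕ) : ℝ) := by push_cast [Nat.cast_sub hΔ]; ring
  have hstart := Nat.div_mul_le_self τ (W - Δ + 1)
  have hend := Nat.add_le_div_mul_add hΔ τ
  refine Set.mem_biUnion (x := τ / (W - Δ + 1)) ?_
    fun p hp hpc => hbad ⟨p, hpc, fun t h₁ h₂ => ?_⟩
  · rw [mem_coe, mem_range, hL]
    exact Nat.div_lt_ceil_succ_div (Nat.succ_pos _) hτ
  · exact hs _ p hp t (by omega) (by omega)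

/-- Probability of a bad column over the lifetime. The schedule guarantees that
for every time `τ` at least `N` honest parties (from a finite set `ι`) are active
throughout `[τ, τ+W]`; each party is independently and uniformly assigned a column
in `[k₂]`. For a fixed column `c`, lifetime `T` and `Δ ≤ W`, the probability that
at some time `0 ≤ τ ≤ T` no party assigned to column `c` is active throughout
`[τ, τ+Δ]` is at most `⌈(T+1)/(W-Δ+1)⌉ · exp(-N/k₂)`. -/
theorem column_good_probability {ι : Type*} [Fintype ι] [DecidableEq ι]
    (Active : ι → ℕ → Prop)
    (N W k₂ T Δ : ℕ) (hk : 0 < k₂) (hΔ : Δ ≤ W)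
    (hsched : ∀ τ : ℕ, ∃ s : Finset ι, N ≤ s.card ∧
        ∀ p ∈ s, ∀ t, τ ≤ t → t ≤ τ + W → Active p t)
    (c : Fin k₂) :
    ((@PMF.uniformOfFintype (ι → Fin k₂) _ ⟨fun _ => ⟨0, hk⟩⟩).toMeasure
        {f | ∃ τ ≤ T, ¬ ∃ p : ι, f p = c ∧ ∀ t, τ ≤ t → t ≤ τ + Δ → Active p t}).toReal
      ≤ (⌈((T : ℝ) + 1) / ((W : ℝ) - Δ + 1)⌉₊ : ℝ) * Real.exp (-((N : ℝ) / k₂)) := by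
  have : Nonempty (Fin k₂) := ⟨⟨0, hk⟩⟩
  set μ := (PMF.uniformOfFintype (ι → Fin k₂)).toMeasure
  choose s hcard hs using hsched
  have hblock (τ : ℕ) : μ.real {f | ∀ p ∈ s τ, f p ≠ c} ≤ Real.exp (-((N : ℝ) / k₂)) := by
    have hk₁ : (1 : ℝ) ≤ k₂ := by exact_mod_cast hk
    rw [PMF.toMeasure_uniformOfFintype_real_forall_ne, Fintype.card_fin, ← mul_one_div (N : ℝ)]
    exact Real.one_sub_pow_le_exp_neg_mul (by positivity) (div_le_one_of_le₀ hk₁ (by positivity))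
      (hcard τ)
  calc μ.real _ ≤ μ.real (⋃ j ∈ range _, _) :=
        measureReal_mono (setOf_exists_uncovered_subset_iUnion Active hΔ s hs c)
          (measure_ne_top _ _)
    _ ≤ ∑ j ∈ range _, μ.real _ := measureReal_biUnion_finset_le _ _
    _ ≤ _ := (sum_le_card_nsmul _ _ _ fun j _ => hblock _).trans_eq
        (by rw [card_range, nsmul_eq_mul])
end
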